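/- arXiv:1106.0736 — 4 statements merged into one kernel-verified Lean document; each statement's English description precedes it below -/
import Mathlib

section
/- The maximum of the sum Σ_l U_l over the feasible utility region equals the maximum over (p, x) with x in the standard simplex of min_l U_l(γ_l(p))/x_l, where the ratio is interpreted as +∞ when x_l = 0 and U_l > 0 (equivalently, the max-min formulation with constraints t·x_l ≤ U_l(γ_l(p)) attains the same optimal value t* = max Σ_l U_l(γ_l(p))). -/
/-!
Summing the constraints `t * x l ≤ U l (γ p l)` over `l` with `∑ l, x l = 1` gives
`t ≤ ∑ l, U l (γ p l) ≤ t*`. Conversely `t*` is feasible at a maximiser `p` of the sum utility: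
take `x l = U l (γ p l) / t*`, or any point of the simplex when `t* = 0`.
-/

open Finset

section Simplex

variable {ι R : Type*} [Fintype ι]

theorem le_sum_of_sum_eq_one_of_mul_le [CommSemiring R] [PartialOrder R]
    [IsOrderedAddMonoid R] {t : R} {x u : ι → R} (hx : ∑ i, x i = 1)
    (htx : ∀ i, t * x i ≤ u i) : t ≤ ∑ i, u i :=
  calc t = ∑ i, t * x i := by rw [← mul_sum, hx, mul_one]
    _ ≤ ∑ i, u i := sum_le_sum fun i _ => htx i

theorem exists_mem_stdSimplex_sum_mul_le [Nonempty ι] [Field R] [LinearOrder R]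
    [IsStrictOrderedRing R] {u : ι → R} (hu : ∀ i, 0 ≤ u i) :
    ∃ x ∈ stdSimplex R ι, ∀ i, (∑ j, u j) * x i ≤ u i := by
  classical
  rcases (sum_nonneg fun i _ => hu i).eq_or_lt with hzero | hpos
  · refine ⟨_, single_mem_stdSimplex R (Classical.arbitrary ι), fun i => ?_⟩
    rw [← hzero, zero_mul]
    exact hu i
  · refine ⟨fun i => u i / ∑ j, u j,
      ⟨fun i => div_nonneg (hu i) hpos.le, by rw [← sum_div, div_self hpos.ne']⟩,
      fun i => (mul_div_cancel₀ _ hpos.ne').le⟩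

theorem isGreatest_maxMin_of_isGreatest_sum [Nonempty ι] {α : Type*} {S : Set α}
    {u : α → ι → ℝ} (hu : ∀ p ∈ S, ∀ i, 0 ≤ u p i) {T : ℝ}
    (hT : IsGreatest {v | ∃ p ∈ S, v = ∑ i, u p i} T) :
    IsGreatest {t | 0 ≤ t ∧ ∃ p ∈ S, ∃ x : ι → ℝ,
      (∀ i, 0 ≤ x i) ∧ ∑ i, x i = 1 ∧ ∀ i, t * x i ≤ u p i} T := by
  obtain ⟨⟨p, hp, rfl⟩, hle⟩ := hT
  refine ⟨⟨sum_nonneg fun i _ => hu p hp i, p, hp, ?_⟩, ?_⟩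
  · obtain ⟨x, ⟨hx0, hx1⟩, hx⟩ := exists_mem_stdSimplex_sum_mul_le (hu p hp)
    exact ⟨x, hx0, hx1, hx⟩
  · rintro t ⟨-, q, hq, x, -, hx1, htx⟩
    exact (le_sum_of_sum_eq_one_of_mul_le hx1 htx).trans (hle ⟨q, hq, rfl⟩)

end Simplex

theorem sinr_nonneg {ι : Type*} [Fintype ι] [DecidableEq ι] {h : ι → ι → ℝ} {n p : ι → ℝ}
    (hh : ∀ k l, 0 ≤ h k l) (hn : ∀ l, 0 ≤ n l) (hp : ∀ l, 0 ≤ p l) (l : ι) :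
    0 ≤ h l l * p l / (n l + ∑ k ∈ univ.erase l, h k l * p k) :=
  div_nonneg (mul_nonneg (hh l l) (hp l))
    (add_nonneg (hn l) (sum_nonneg fun k _ => mul_nonneg (hh k l) (hp k)))

theorem stmt2_general (L : ℕ) [NeZero L]
    (h : Fin L → Fin L → ℝ) (n Pmax : Fin L → ℝ)
    (hh : ∀ k l, 0 < h k l) (hn : ∀ l, 0 < n l)
    (U : Fin L → ℝ → ℝ)
    (hUnn : ∀ l y, 0 ≤ y → 0 ≤ U l y)
    (γ : (Fin L → ℝ) → Fin L → ℝ)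
    (hγ : ∀ p l, γ p l = h l l * p l / (n l + ∑ k ∈ Finset.univ.erase l, h k l * p k))
    (box : Set (Fin L → ℝ))
    (hbox : box = {p | ∀ l, 0 ≤ p l ∧ p l ≤ Pmax l})
    (tstar : ℝ)
    (hstar : IsGreatest {v | ∃ p ∈ box, v = ∑ l, U l (γ p l)} tstar) :
    IsGreatest {t | 0 ≤ t ∧ ∃ p ∈ box, ∃ x : Fin L → ℝ,
      (∀ l, 0 ≤ x l) ∧ ∑ l, x l = 1 ∧ ∀ l, t * x l ≤ U l (γ p l)} tstar := by
  subst hbox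
  refine isGreatest_maxMin_of_isGreatest_sum (fun p hp l => hUnn l _ ?_) hstar
  rw [hγ]
  exact sinr_nonneg (fun k l => (hh k l).le) (fun l => (hn l).le) (fun k => (hp k).1) l

/-- The maximum of the sum utility over the feasible region equals the optimal value of the
max-min formulation: maximize t subject to t·x_l ≤ U_l(γ_l(p)) with x in the simplex. -/
theorem stmt2 (L : ℕ) [NeZero L]
    (h : Fin L → Fin L → ℝ) (n Pmax : Fin L → ℝ)
    (hh : ∀ k l, 0 < h k l) (hn : ∀ l, 0 < n l) (hPmax : ∀ l, 0 ≤ Pmax l)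
    (U : Fin L → ℝ → ℝ)
    (hUc : ∀ l, ContinuousOn (U l) (Set.Ici 0))
    (hUm : ∀ l, StrictMonoOn (U l) (Set.Ici 0))
    (hU0 : ∀ l, U l 0 = 0)
    (hUnn : ∀ l y, 0 ≤ y → 0 ≤ U l y)
    (γ : (Fin L → ℝ) → Fin L → ℝ)
    (hγ : ∀ p l, γ p l = h l l * p l / (n l + ∑ k ∈ Finset.univ.erase l, h k l * p k))
    (box : Set (Fin L → ℝ))
    (hbox : box = {p | ∀ l, 0 ≤ p l ∧ p l ≤ Pmax l})
    (tstar : ℝ)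
    (hstar : IsGreatest {v | ∃ p ∈ box, v = ∑ l, U l (γ p l)} tstar) :
    IsGreatest {t | 0 ≤ t ∧ ∃ p ∈ box, ∃ x : Fin L → ℝ,
      (∀ l, 0 ≤ x l) ∧ ∑ l, x l = 1 ∧ ∀ l, t * x l ≤ U l (γ p l)} tstar :=
  stmt2_general L h n Pmax hh hn U hUnn γ hγ box hbox tstar hstar
end

section
/- If I : ℝ^L_{≥0} → ℝ^L_{>0} is a standard interference function (positive, monotone, scalable) and a fixed point p* = I(p*) exists, then the fixed point is unique. -/
/-!
If `p` is a positive fixed point and `q` a nonnegative one, let `α = max_j q_j / p_j`, attained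
at `j`, so `q ≤ α • p`. Were `α > 1`, monotonicity and scalability would give
`q_j = I(q)_j ≤ I(α • p)_j < α I(p)_j = α p_j = q_j`. Hence `q ≤ p`, and by symmetry `p = q`
(fixed points are positive by positivity of `I`).
-/

section

variable {ι : Type*} [Fintype ι]

lemma exists_max_ratio (p q : ι → ℝ) (hp : ∀ i, 0 < p i) (l : ι) :
    ∃ j, q l / p l ≤ q j / p j ∧ ∀ i, q i ≤ q j / p j * p i := by
  obtain ⟨j, -, hj⟩ :=
    Finset.exists_max_image Finset.univ (fun i => q i / p i) ⟨l, Finset.mem_univ l⟩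
  refine ⟨j, hj l (Finset.mem_univ l), fun i => ?_⟩
  rw [← div_le_iff₀ (hp i)]
  exact hj i (Finset.mem_univ i)

lemma le_of_isFixedPt_of_pos {I : (ι → ℝ) → ι → ℝ}
    (hmono : ∀ p q : ι → ℝ, (∀ k, 0 ≤ q k) → (∀ k, q k ≤ p k) → ∀ l, I q l ≤ I p l)
    (hscale : ∀ α : ℝ, 1 < α → ∀ p, (∀ k, 0 ≤ p k) → ∀ l, I (α • p) l < α * I p l)
    {p q : ι → ℝ} (hp : ∀ k, 0 < p k) (hq : ∀ k, 0 ≤ q k)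
    (hfp : I p = p) (hfq : I q = q) (l : ι) : q l ≤ p l := by
  by_contra! hlt
  obtain ⟨j, hlj, hqj⟩ := exists_max_ratio p q hp l
  set α := q j / p j
  have hα : 1 < α := lt_of_lt_of_le ((one_lt_div (hp l)).mpr hlt) hlj
  have hαj : α * p j = q j := div_mul_cancel₀ (q j) (hp j).ne'
  have : q j < q j :=
    calc q j = I q j := by rw [hfq]
      _ ≤ I (α • p) j := hmono (α • p) q hq hqj j
      _ < α * I p j := hscale α hα p (fun k => (hp k).le) j
      _ = q j := by rw [hfp, hαj]
  exact this.false

end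

/-- A standard interference function (positive, monotone, scalable) has at most one
fixed point among nonnegative power vectors. -/
theorem stmt7 (L : ℕ) (I : (Fin L → ℝ) → Fin L → ℝ)
    (hpos : ∀ p, (∀ k, 0 ≤ p k) → ∀ l, 0 < I p l)
    (hmono : ∀ p q : Fin L → ℝ, (∀ k, 0 ≤ q k) → (∀ k, q k ≤ p k) → ∀ l, I q l ≤ I p l)
    (hscale : ∀ α : ℝ, 1 < α → ∀ p, (∀ k, 0 ≤ p k) → ∀ l, I (α • p) l < α * I p l)
    (p q : Fin L → ℝ) (hp : ∀ k, 0 ≤ p k) (hq : ∀ k, 0 ≤ q k)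
    (hfp : I p = p) (hfq : I q = q) : p = q := by
  have hp_pos : ∀ k, 0 < p k := fun k => hfp ▸ hpos p hp k
  have hq_pos : ∀ k, 0 < q k := fun k => hfq ▸ hpos q hq k
  funext l
  exact le_antisymm (le_of_isFixedPt_of_pos hmono hscale hq_pos hp hfq hfp l)
    (le_of_isFixedPt_of_pos hmono hscale hp_pos hq hfp hfq l)
end

section
/- For a standard interference function I with fixed point p*, the synchronous iteration p(t+1) = I(p(t)) started from p(0) = 0 produces a componentwise nondecreasing sequence that converges to p*. -/
/-!
The iterates `f^[t] 0` increase (by monotonicity, since `0 ≤ f 0`) and stay below every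
nonnegative fixed point `p`, so they converge to their supremum `q`. Comparing `q` with its
shrunk copies `α⁻¹ • q`, which the iterates eventually exceed, scalability lets `f` pass to
the limit, so `q` is a fixed point; comparing two fixed points the same way shows that
nonnegative fixed points are unique, so `q = p`.
-/

open Filter Topology Function

structure StandardInterference {ι : Type*} (f : (ι → ℝ) → ι → ℝ) : Prop where
  pos : ∀ p, 0 ≤ p → ∀ l, 0 < f p l
  mono : ∀ p q, 0 ≤ q → q ≤ p → f q ≤ f p
  scale : ∀ α : ℝ, 1 < α → ∀ p, 0 ≤ p → ∀ l, f (α • p) l < α * f p l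

namespace StandardInterference

variable {ι : Type*} {f : (ι → ℝ) → ι → ℝ}

lemma pos_of_isFixedPt (hf : StandardInterference f) {p : ι → ℝ} (hp : 0 ≤ p)
    (hfix : IsFixedPt f p) (k : ι) : 0 < p k :=
  hfix ▸ hf.pos p hp k

/-- If `p k > q k` for some `k`, scale `q` by the largest ratio `α = p k₀ / q k₀ > 1`:
then `p ≤ α • q`, and scalability gives `p k₀ < α * q k₀ = p k₀`. -/
lemma le_of_isFixedPt (hf : StandardInterference f) [Finite ι] {p q : ι → ℝ} (hp : 0 ≤ p)
    (hq : 0 ≤ q) (hpfix : IsFixedPt f p) (hqfix : IsFixedPt f q) : p ≤ q := by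
  intro k
  by_contra hk
  have hq_pos := hf.pos_of_isFixedPt hq hqfix
  have : Nonempty ι := ⟨k⟩
  obtain ⟨k₀, hk₀⟩ := Finite.exists_max fun j => p j / q j
  set α := p k₀ / q k₀
  have hα : 1 < α := (one_lt_div (hq_pos k)).mpr (not_le.mp hk) |>.trans_le (hk₀ k)
  have hp_le : p ≤ α • q := fun j => (div_le_iff₀ (hq_pos j)).mp (hk₀ j)
  have hscaled : α * q k₀ = p k₀ := div_mul_cancel₀ _ (hq_pos k₀).ne'
  have := calc p k₀ = f p k₀ := (congrFun hpfix k₀).symm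
    _ ≤ f (α • q) k₀ := hf.mono _ _ hp hp_le k₀
    _ < α * f q k₀ := hf.scale α hα q hq k₀
    _ = p k₀ := by rw [hqfix, hscaled]
  exact lt_irrefl _ this

lemma iterate_nonneg (hf : StandardInterference f) (t : ℕ) : 0 ≤ f^[t] 0 := by
  cases t with
  | zero => exact le_rfl
  | succ t =>
    rw [iterate_succ_apply']
    exact fun k => (hf.pos _ (hf.iterate_nonneg t) k).le

lemma monotone_iterate_zero (hf : StandardInterference f) : Monotone fun t => f^[t] 0 := by
  refine monotone_nat_of_le_succ fun t => ?_
  induction t with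
  | zero => exact fun k => (hf.pos 0 le_rfl k).le
  | succ t ih =>
    simp only [iterate_succ_apply' _ (t + 1), iterate_succ_apply' _ t] at ih ⊢
    exact hf.mono _ _ (hf.iterate_nonneg _) ih

lemma iterate_zero_le_of_isFixedPt (hf : StandardInterference f) {p : ι → ℝ} (hp : 0 ≤ p)
    (hfix : IsFixedPt f p) (t : ℕ) : f^[t] 0 ≤ p := by
  induction t with
  | zero => exact hp
  | succ t ih =>
    rw [iterate_succ_apply', ← hfix]
    exact hf.mono _ _ (hf.iterate_nonneg t) ih

/-- For `α > 1`, eventually `α⁻¹ • q ≤ p t`, hence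
`f q < α * f (α⁻¹ • q) ≤ α * f (p t) ≤ α * q`. -/
lemma apply_le_of_tendsto (hf : StandardInterference f) [Finite ι] {q : ι → ℝ}
    (hq : ∀ k, 0 < q k) {p : ℕ → ι → ℝ} (hlim : Tendsto p atTop (𝓝 q))
    (hfp : ∀ t, f (p t) ≤ q) : f q ≤ q := by
  have hlt : ∀ α : ℝ, 1 < α → ∀ k, f q k < α * q k := by
    intro α hα k
    have hα₀ : 0 < α := one_pos.trans hα
    have hev : ∀ᶠ t in atTop, ∀ j, α⁻¹ * q j < p t j := by
      refine eventually_all.mpr fun j => (tendsto_pi_nhds.mp hlim j).eventually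
        (eventually_gt_nhds ?_)
      exact mul_lt_of_lt_one_left (hq j) (inv_lt_one_of_one_lt₀ hα)
    obtain ⟨t, ht⟩ := hev.exists
    have hq' : 0 ≤ α⁻¹ • q := smul_nonneg (inv_nonneg.mpr hα₀.le) fun j => (hq j).le
    calc f q k = f (α • α⁻¹ • q) k := by rw [smul_inv_smul₀ hα₀.ne']
      _ < α * f (α⁻¹ • q) k := hf.scale α hα _ hq' k
      _ ≤ α * q k := by
        gcongr
        exact (hf.mono _ _ hq' (fun j => (ht j).le) k).trans (hfp t k)
  intro k
  by_contra hk
  have := hlt (f q k / q k) ((one_lt_div (hq k)).mpr (not_le.mp hk)) k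
  rw [div_mul_cancel₀ _ (hq k).ne'] at this
  exact lt_irrefl _ this

theorem tendsto_iterate_zero (hf : StandardInterference f) [Finite ι] {p : ι → ℝ}
    (hp : 0 ≤ p) (hfix : IsFixedPt f p) : Tendsto (fun t => f^[t] 0) atTop (𝓝 p) := by
  have hbdd : BddAbove (Set.range fun t => f^[t] 0) :=
    ⟨p, Set.forall_mem_range.mpr (hf.iterate_zero_le_of_isFixedPt hp hfix)⟩
  set q := ⨆ t, f^[t] 0
  have hlim : Tendsto (fun t => f^[t] 0) atTop (𝓝 q) :=
    tendsto_atTop_ciSup hf.monotone_iterate_zero hbdd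
  have hle_q (t : ℕ) : f^[t] 0 ≤ q := le_ciSup hbdd t
  have hq_pos (k : ι) : 0 < q k := (hf.pos 0 le_rfl k).trans_le (hle_q 1 k)
  have hq : 0 ≤ q := fun k => (hq_pos k).le
  have hfq_le : f q ≤ q := hf.apply_le_of_tendsto hq_pos hlim fun t => by
    simpa only [iterate_succ_apply'] using hle_q (t + 1)
  have hle_fq : q ≤ f q := ciSup_le fun t => by
    cases t with
    | zero => exact fun k => (hf.pos q hq k).le
    | succ t =>
      rw [iterate_succ_apply']
      exact hf.mono _ _ (hf.iterate_nonneg t) (hle_q t)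
  have hq_eq : q = p := le_antisymm (ciSup_le (hf.iterate_zero_le_of_isFixedPt hp hfix))
    (hf.le_of_isFixedPt hp hq hfix (le_antisymm hfq_le hle_fq))
  rwa [hq_eq] at hlim

end StandardInterference

/-- For a standard interference function with fixed point p*, the synchronous iteration
started from 0 is componentwise nondecreasing and converges to p*. -/
theorem stmt8 (L : ℕ) (I : (Fin L → ℝ) → Fin L → ℝ)
    (hpos : ∀ p, (∀ k, 0 ≤ p k) → ∀ l, 0 < I p l)
    (hmono : ∀ p q : Fin L → ℝ, (∀ k, 0 ≤ q k) → (∀ k, q k ≤ p k) → ∀ l, I q l ≤ I p l)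
    (hscale : ∀ α : ℝ, 1 < α → ∀ p, (∀ k, 0 ≤ p k) → ∀ l, I (α • p) l < α * I p l)
    (pstar : Fin L → ℝ) (hps : ∀ k, 0 ≤ pstar k) (hfix : I pstar = pstar)
    (seq : ℕ → Fin L → ℝ) (hseq0 : seq 0 = 0)
    (hseqs : ∀ t, seq (t + 1) = I (seq t)) :
    (∀ t k, seq t k ≤ seq (t + 1) k) ∧
    Filter.Tendsto seq Filter.atTop (nhds pstar) := by
  have hI : StandardInterference I := ⟨hpos, hmono, hscale⟩
  -- `I^[t]` would parse `I` as the unit-interval notation.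
  have hseq : seq = fun t => (I)^[t] 0 := funext fun t => by
    induction t with
    | zero => exact hseq0
    | succ t ih => rw [hseqs, ih, iterate_succ_apply']
  subst hseq
  exact ⟨fun t => hI.monotone_iterate_zero t.le_succ, hI.tendsto_iterate_zero hps hfix⟩
end

section
/- In the two-user case with nonnegative powers, the feasible SINR region {(γ_1(p), γ_2(p)) : 0 ≤ p ≤ P^max} is a compact subset of ℝ²_{≥0}, and its weak Pareto boundary is achieved by power vectors where at least one user transmits at maximum power or zero power. -/
/-!
The SINR map is continuous on the power box, so the region is compact. At a power vector
strictly inside the box, scaling it by some `t > 1` stays in the box and strictly raises both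
SINRs, because the noise loses relative weight; so such a point is dominated in both
coordinates and cannot lie on the weak Pareto boundary.
-/

open Set Filter Topology

/-- SINR of a user with direct gain `h`, noise power `n` and cross gain `g`, transmitting at
power `x` against an interferer transmitting at power `y`. -/
noncomputable def sinr (h n g x y : ℝ) : ℝ := h * x / (n + g * y)

section Sinr

variable {h n g x y : ℝ}

lemma sinr_nonneg_s10 (hh : 0 ≤ h) (hn : 0 < n) (hg : 0 ≤ g) (hx : 0 ≤ x) (hy : 0 ≤ y) :
    0 ≤ sinr h n g x y := by
  unfold sinr; positivity

lemma ContinuousOn.sinr {X : Type*} [TopologicalSpace X] {f k : X → ℝ} {s : Set X}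
    (hn : 0 < n) (hg : 0 ≤ g) (hf : ContinuousOn f s) (hk : ContinuousOn k s)
    (hk0 : ∀ z ∈ s, 0 ≤ k z) : ContinuousOn (fun z => sinr h n g (f z) (k z)) s :=
  (continuousOn_const.mul hf).div (continuousOn_const.add (continuousOn_const.mul hk))
    fun z hz => by have := hk0 z hz; positivity

lemma sinr_lt_sinr_smul {t : ℝ} (hh : 0 < h) (hn : 0 < n) (hg : 0 ≤ g) (hx : 0 < x)
    (hy : 0 ≤ y) (ht : 1 < t) : sinr h n g x y < sinr h n g (t * x) (t * y) := by
  unfold sinr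
  rw [div_lt_div_iff₀ (by positivity) (by positivity)]
  nlinarith [mul_pos (mul_pos hh hn) hx]

end Sinr

lemma exists_one_lt_smul_mem_of_isOpen {E : Type*} [TopologicalSpace E] [AddCommMonoid E]
    [Module ℝ E] [ContinuousSMul ℝ E] {U : Set E} {p : E} (hU : IsOpen U) (hp : p ∈ U) :
    ∃ t : ℝ, 1 < t ∧ t • p ∈ U := by
  have hcont : Tendsto (fun t : ℝ => t • p) (𝓝[>] 1) (𝓝 p) :=
    ((continuous_id.smul (continuous_const (y := p))).tendsto' 1 p (one_smul ℝ p)).mono_left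
      nhdsWithin_le_nhds
  exact (eventually_mem_nhdsWithin.and (hcont.eventually (hU.mem_nhds hp))).exists

theorem stmt10_general (h11 h12 h21 h22 n1 n2 P1 P2 : ℝ)
    (hh11 : 0 < h11) (hh12 : 0 < h12) (hh21 : 0 < h21) (hh22 : 0 < h22)
    (hn1 : 0 < n1) (hn2 : 0 < n2)
    (γ1 γ2 : ℝ × ℝ → ℝ)
    (hγ1 : ∀ p, γ1 p = h11 * p.1 / (n1 + h21 * p.2))
    (hγ2 : ∀ p, γ2 p = h22 * p.2 / (n2 + h12 * p.1))
    (S : Set (ℝ × ℝ))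
    (hS : S = (fun p => (γ1 p, γ2 p)) '' (Set.Icc 0 P1 ×ˢ Set.Icc 0 P2)) :
    IsCompact S ∧ S ⊆ {v : ℝ × ℝ | 0 ≤ v.1 ∧ 0 ≤ v.2} ∧
    ∀ v ∈ S, (¬ ∃ w ∈ S, v.1 < w.1 ∧ v.2 < w.2) →
      ∃ p ∈ Set.Icc (0 : ℝ) P1 ×ˢ Set.Icc (0 : ℝ) P2, (γ1 p, γ2 p) = v ∧
        (p.1 = 0 ∨ p.1 = P1 ∨ p.2 = 0 ∨ p.2 = P2) := by
  have hγ1 : γ1 = fun p => sinr h11 n1 h21 p.1 p.2 := funext hγ1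
  have hγ2 : γ2 = fun p => sinr h22 n2 h12 p.2 p.1 := funext hγ2
  subst hS hγ1 hγ2
  refine ⟨?_, ?_, ?_⟩
  · refine (isCompact_Icc.prod isCompact_Icc).image_of_continuousOn
      (ContinuousOn.prodMk ?_ ?_)
    · exact .sinr hn1 hh21.le continuousOn_fst continuousOn_snd fun p hp => hp.2.1
    · exact .sinr hn2 hh12.le continuousOn_snd continuousOn_fst fun p hp => hp.1.1
  · rintro _ ⟨p, ⟨⟨hp1, -⟩, hp2, -⟩, rfl⟩
    exact ⟨sinr_nonneg_s10 hh11.le hn1 hh21.le hp1 hp2, sinr_nonneg_s10 hh22.le hn2 hh12.le hp2 hp1⟩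
  · rintro _ ⟨p, hp, rfl⟩ hmax
    refine ⟨p, hp, rfl, ?_⟩
    by_contra! hbd
    obtain ⟨h0₁, hP₁, h0₂, hP₂⟩ := hbd
    have hint : p ∈ Ioo 0 P1 ×ˢ Ioo 0 P2 :=
      ⟨⟨hp.1.1.lt_of_ne' h0₁, hp.1.2.lt_of_ne hP₁⟩, hp.2.1.lt_of_ne' h0₂, hp.2.2.lt_of_ne hP₂⟩
    obtain ⟨t, ht, htp⟩ := exists_one_lt_smul_mem_of_isOpen (isOpen_Ioo.prod isOpen_Ioo) hint
    refine hmax ⟨_, ⟨t • p, prod_mono Ioo_subset_Icc_self Ioo_subset_Icc_self htp, rfl⟩, ?_, ?_⟩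
    · exact sinr_lt_sinr_smul hh11 hn1 hh21.le hint.1.1 hint.2.1.le ht
    · exact sinr_lt_sinr_smul hh22 hn2 hh12.le hint.2.1 hint.1.1.le ht

/-- In the two-user case, the feasible SINR region is compact, lies in the nonnegative
quadrant, and every weak Pareto boundary point is achieved by a power vector where at
least one user transmits at maximum power or zero power. -/
theorem stmt10 (h11 h12 h21 h22 n1 n2 P1 P2 : ℝ)
    (hh11 : 0 < h11) (hh12 : 0 < h12) (hh21 : 0 < h21) (hh22 : 0 < h22)
    (hn1 : 0 < n1) (hn2 : 0 < n2) (hP1 : 0 ≤ P1) (hP2 : 0 ≤ P2)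
    (γ1 γ2 : ℝ × ℝ → ℝ)
    (hγ1 : ∀ p, γ1 p = h11 * p.1 / (n1 + h21 * p.2))
    (hγ2 : ∀ p, γ2 p = h22 * p.2 / (n2 + h12 * p.1))
    (S : Set (ℝ × ℝ))
    (hS : S = (fun p => (γ1 p, γ2 p)) '' (Set.Icc 0 P1 ×ˢ Set.Icc 0 P2)) :
    IsCompact S ∧ S ⊆ {v : ℝ × ℝ | 0 ≤ v.1 ∧ 0 ≤ v.2} ∧
    ∀ v ∈ S, (¬ ∃ w ∈ S, v.1 < w.1 ∧ v.2 < w.2) →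
      ∃ p ∈ Set.Icc (0 : ℝ) P1 ×ˢ Set.Icc (0 : ℝ) P2, (γ1 p, γ2 p) = v ∧
        (p.1 = 0 ∨ p.1 = P1 ∨ p.2 = 0 ∨ p.2 = P2) :=
  stmt10_general h11 h12 h21 h22 n1 n2 P1 P2 hh11 hh12 hh21 hh22 hn1 hn2 γ1 γ2 hγ1 hγ2 S hS
end
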